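/- arXiv:1610.06445 — 2 statements merged into one kernel-verified Lean document; each statement's English description precedes it below -/
import Mathlib

section
/- Let n ≥ 1, j ≥ 1, p ≥ 1, and let ξ* = (1,0,…,0) ∈ ℝ^{4n} (so that (ξ*_{AA'}) has first two rows equal to the 2×2 identity and all other rows zero). Then ϑ ∈ Λ^j ℂ^{2n} ⊗ ⊙^p ℂ² satisfies σ_j^{(p)}(ξ*)ϑ = 0 if and only if: (i) ϑ(A₁,…,A_j; A'₁,…,A'_p) = 0 whenever A₁,…,A_j ∈ {2,…,2n−1}; and (ii) ϑ(1, A₂,…,A_j; 1, A'₂,…,A'_p) = −ϑ(0, A₂,…,A_j; 0, A'₂,…,A'_p) whenever A₂,…,A_j ∈ {2,…,2n−1} and A'₂,…,A'_p ∈ {0,1}. -/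
noncomputable section

/-- The complex `2n × 2` matrix `(ξ_{AA'})` associated to `ξ ∈ ℝ^{4n}`:
row `2l` is `(ξ_{4l+1} + i ξ_{4l+2}, −ξ_{4l+3} − i ξ_{4l+4})` and row `2l+1` is
`(ξ_{4l+3} − i ξ_{4l+4}, ξ_{4l+1} − i ξ_{4l+2})` (using 1-based names, 0-based indices). -/
def xiMat (n : ℕ) (ξ : Fin (4 * n) → ℝ) : Matrix (Fin (2 * n)) (Fin 2) ℂ :=
  Matrix.of fun A A' =>
    if A.val % 2 = 0 then
      (if A'.val = 0 then
        (⟨ξ ⟨4 * (A.val / 2), by have := A.isLt; omega⟩,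
          ξ ⟨4 * (A.val / 2) + 1, by have := A.isLt; omega⟩⟩ : ℂ)
      else
        (⟨-ξ ⟨4 * (A.val / 2) + 2, by have := A.isLt; omega⟩,
          -ξ ⟨4 * (A.val / 2) + 3, by have := A.isLt; omega⟩⟩ : ℂ))
    else
      (if A'.val = 0 then
        (⟨ξ ⟨4 * (A.val / 2) + 2, by have := A.isLt; omega⟩,
          -ξ ⟨4 * (A.val / 2) + 3, by have := A.isLt; omega⟩⟩ : ℂ)
      else
        (⟨ξ ⟨4 * (A.val / 2), by have := A.isLt; omega⟩,
          -ξ ⟨4 * (A.val / 2) + 1, by have := A.isLt; omega⟩⟩ : ℂ))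

/-- The raised epsilon symbol on primed indices: `ε^{01} = −1`, `ε^{10} = 1`. -/
def epsUp (a b : Fin 2) : ℂ :=
  if a.val = 0 ∧ b.val = 1 then -1 else if a.val = 1 ∧ b.val = 0 then 1 else 0

/-- `ξ_A{}^{A'} = ∑_{B'} ξ_{AB'} ε^{B'A'}`. -/
def xiUp (n : ℕ) (ξ : Fin (4 * n) → ℝ) (A : Fin (2 * n)) (A' : Fin 2) : ℂ :=
  ∑ B' : Fin 2, xiMat n ξ A B' * epsUp B' A'

/-- Membership in `Λ^q ℂ^{2n} ⊗ ⊙^p ℂ²`: totally antisymmetric in the `q` unprimed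
arguments and totally symmetric in the `p` primed arguments. -/
def IsAltSym (n q p : ℕ) (ϑ : (Fin q → Fin (2 * n)) → (Fin p → Fin 2) → ℂ) : Prop :=
  (∀ (σ : Equiv.Perm (Fin q)) (a : Fin q → Fin (2 * n)) (b : Fin p → Fin 2),
      ϑ (a ∘ σ) b = ((Equiv.Perm.sign σ : ℤ) : ℂ) * ϑ a b) ∧
  (∀ (σ : Equiv.Perm (Fin p)) (a : Fin q → Fin (2 * n)) (b : Fin p → Fin 2),
      ϑ a (b ∘ σ) = ϑ a b)

/-- The first-order symbol map
`σ_j^{(p+1)}(ξ) : Λ^j ℂ^{2n} ⊗ ⊙^{p+1} ℂ² → Λ^{j+1} ℂ^{2n} ⊗ ⊙^{p} ℂ²`,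
`(σϑ)(A₀,…,A_j; B) = (1/(j+1)) ∑_s (−1)^s ∑_{a} ξ_{A_s}{}^{a} ϑ(A₀,…,Â_s,…,A_j; a, B)`. -/
def symb (n j p : ℕ) (ξ : Fin (4 * n) → ℝ)
    (ϑ : (Fin j → Fin (2 * n)) → (Fin (p + 1) → Fin 2) → ℂ) :
    (Fin (j + 1) → Fin (2 * n)) → (Fin p → Fin 2) → ℂ :=
  fun A B => ((j + 1 : ℕ) : ℂ)⁻¹ * ∑ s : Fin (j + 1), (-1 : ℂ) ^ (s : ℕ) *
    ∑ a : Fin 2, xiUp n ξ (A s) a * ϑ (A ∘ s.succAbove) (Fin.cons a B)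

/-!
At `ξ* = (1, 0, …, 0)` the contraction `ξ*_x{}^{A'}` vanishes unless `x ∈ {0, 1}`, so
`σϑ(A; B)` is an alternating sum over the positions of `A` holding `0` or `1`. Such a sum
vanishes when `A` has a repeated entry, because the two terms removing the two copies cancel
(they differ by the sign of a cycle). For injective `A` at most two terms survive: if only one
of `0`, `1` occurs, the surviving value of `ϑ` has all arguments `≥ 2` and is killed by (i);
if both occur, replacing the `0` by `1` produces a repeated entry, and (ii) turns the resulting
cancellation into the vanishing of `σϑ(A; B)`. Conversely, evaluating `σϑ` at `(c, A)` and at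
`(0, 1, A)` with all entries of `A` at least `2` gives (i) and (ii).
-/

def IsAlternatingFun {R X : Type*} [Ring R] {n : ℕ} (f : (Fin n → X) → R) : Prop :=
  ∀ (σ : Equiv.Perm (Fin n)) (v : Fin n → X), f (v ∘ σ) = ((Equiv.Perm.sign σ : ℤ) : R) * f v

theorem IsAltSym.isAlternatingFun {n q p : ℕ} {ϑ : (Fin q → Fin (2 * n)) → (Fin p → Fin 2) → ℂ}
    (hϑ : IsAltSym n q p ϑ) (b : Fin p → Fin 2) : IsAlternatingFun fun a => ϑ a b :=
  fun σ a => hϑ.1 σ a b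

theorem Fin.removeNth_one_cons_cons {α : Type*} {m : ℕ} (a b : α) (r : Fin m → α) :
    Fin.removeNth 1 (Fin.cons a (Fin.cons b r) : Fin (m + 2) → α) = Fin.cons a r := by
  ext t
  cases t using Fin.cases with
  | zero => rfl
  | succ t => simp [Fin.removeNth_apply]

namespace IsAlternatingFun

variable {R X : Type*} [CommRing R] {n : ℕ}

theorem apply_insertNth {f : (Fin (n + 1) → X) → R} (hf : IsAlternatingFun f)
    (p : Fin (n + 1)) (x : X) (v : Fin n → X) :
    f (p.insertNth x v) = (-1) ^ (p : ℕ) * f (Fin.cons x v) := by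
  rw [← Fin.cons_comp_cycleRange, hf, Fin.sign_cycleRange]
  push_cast
  rfl

theorem apply_eq_zero_of_eq [NoZeroDivisors R] [CharZero R] {f : (Fin n → X) → R}
    (hf : IsAlternatingFun f) {v : Fin n → X} {i j : Fin n} (hv : v i = v j) (hij : i ≠ j) :
    f v = 0 := by
  have hswap : v ∘ Equiv.swap i j = v := by
    ext k
    rcases eq_or_ne k i with rfl | hki
    · simp [hv]
    rcases eq_or_ne k j with rfl | hkj
    · simp [hv]
    · simp [Equiv.swap_apply_of_ne_of_ne hki hkj]
  have h := hf (Equiv.swap i j) v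
  rw [hswap, Equiv.Perm.sign_swap hij] at h
  exact self_eq_neg.mp (by simpa using h)

theorem neg_one_pow_mul_removeNth_add_eq_zero {f : (Fin (n + 1) → X) → R}
    (hf : IsAlternatingFun f) {v : Fin (n + 2) → X} {i j : Fin (n + 2)} (hv : v i = v j)
    (hij : i ≠ j) :
    (-1) ^ (i : ℕ) * f (i.removeNth v) + (-1) ^ (j : ℕ) * f (j.removeNth v) = 0 := by
  obtain ⟨k, rfl⟩ := Fin.exists_succAbove_eq hij
  set r := k.removeNth (j.removeNth v) with hr
  have hj : j.removeNth v = k.insertNth (v j) r := by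
    rw [← hv]; exact (Fin.insertNth_self_removeNth k _).symm
  have hi : (j.succAbove k).removeNth v = (k.predAbove j).insertNth (v j) r := by
    rw [hr, Fin.removeNth_removeNth_eq_swap]
    convert (Fin.insertNth_self_removeNth (k.predAbove j) ((j.succAbove k).removeNth v)).symm
      using 2
    rw [Fin.removeNth_apply, Fin.succAbove_succAbove_predAbove]
  rw [hi, hj, hf.apply_insertNth, hf.apply_insertNth, ← mul_assoc, ← mul_assoc, ← pow_add,
    ← pow_add, Fin.neg_one_pow_succAbove_add_predAbove]
  ring

theorem sum_neg_one_pow_mul_removeNth_eq_zero [NoZeroDivisors R] [CharZero R]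
    {h : X → (Fin (n + 1) → X) → R} (hh : ∀ x, IsAlternatingFun (h x)) {v : Fin (n + 2) → X}
    {i j : Fin (n + 2)} (hv : v i = v j) (hij : i ≠ j) :
    ∑ k : Fin (n + 2), (-1) ^ (k : ℕ) * h (v k) (k.removeNth v) = 0 := by
  rw [Fintype.sum_eq_add i j hij fun k ⟨hki, hkj⟩ => ?_, hv]
  · exact (hh (v j)).neg_one_pow_mul_removeNth_add_eq_zero hv hij
  obtain ⟨i', rfl⟩ := Fin.exists_succAbove_eq hki.symm
  obtain ⟨j', rfl⟩ := Fin.exists_succAbove_eq hkj.symm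
  rw [(hh _).apply_eq_zero_of_eq hv (ne_of_apply_ne _ hij), mul_zero]

end IsAlternatingFun

abbrev basepoint (n : ℕ) : Fin (4 * n) → ℝ := fun i => if i.val = 0 then 1 else 0

theorem sum_xiUp_basepoint_mul (n : ℕ) (x : Fin (2 * n)) (g : Fin 2 → ℂ) :
    ∑ a, xiUp n (basepoint n) x a * g a =
      if x.val = 0 then -g 1 else if x.val = 1 then g 0 else 0 := by
  obtain ⟨x, hx⟩ := x
  simp only [xiUp, xiMat, epsUp, basepoint, Fin.sum_univ_two, Matrix.of_apply]
  rcases Nat.lt_or_ge x 2 with hx2 | hx2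
  · interval_cases x <;> simp [Complex.ext_iff]
  · simp [Complex.ext_iff, show x ≠ 0 by omega, show x ≠ 1 by omega, show ¬x ≤ 1 by omega]

/-- `∑_{A'} ξ*_x{}^{A'} ϑ(w; A', B)`, see `sum_xiUp_basepoint_mul`. -/
def basepointContraction {n j p : ℕ} (ϑ : (Fin j → Fin (2 * n)) → (Fin (p + 1) → Fin 2) → ℂ)
    (B : Fin p → Fin 2) (x : Fin (2 * n)) (w : Fin j → Fin (2 * n)) : ℂ :=
  if x.val = 0 then -ϑ w (Fin.cons 1 B) else if x.val = 1 then ϑ w (Fin.cons 0 B) else 0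

section basepointContraction

variable {n j p : ℕ} {ϑ : (Fin j → Fin (2 * n)) → (Fin (p + 1) → Fin 2) → ℂ}

theorem symb_basepoint_apply (A : Fin (j + 1) → Fin (2 * n)) (B : Fin p → Fin 2) :
    symb n j p (basepoint n) ϑ A B = ((j + 1 : ℕ) : ℂ)⁻¹ *
      ∑ s : Fin (j + 1), (-1) ^ (s : ℕ) * basepointContraction ϑ B (A s) (s.removeNth A) := by
  simp only [symb, sum_xiUp_basepoint_mul, basepointContraction]
  rfl

theorem symb_basepoint_eq_zero_iff :
    symb n j p (basepoint n) ϑ = 0 ↔ ∀ (A : Fin (j + 1) → Fin (2 * n)) (B : Fin p → Fin 2),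
      ∑ s : Fin (j + 1), (-1) ^ (s : ℕ) * basepointContraction ϑ B (A s) (s.removeNth A) = 0 := by
  simp only [funext_iff, symb_basepoint_apply, Pi.zero_apply, mul_eq_zero, inv_eq_zero,
    Nat.cast_eq_zero, Nat.add_one_ne_zero, false_or]

theorem basepointContraction_of_two_le (B : Fin p → Fin 2) {x : Fin (2 * n)} (hx : 2 ≤ x.val)
    (w : Fin j → Fin (2 * n)) : basepointContraction ϑ B x w = 0 := by
  simp [basepointContraction, show x.val ≠ 0 by omega, show x.val ≠ 1 by omega]

theorem basepointContraction_eq_zero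
    (hi : ∀ A : Fin j → Fin (2 * n), (∀ t, 2 ≤ (A t).val) → ∀ B, ϑ A B = 0)
    (B : Fin p → Fin 2) (x : Fin (2 * n)) {w : Fin j → Fin (2 * n)} (hw : ∀ t, 2 ≤ (w t).val) :
    basepointContraction ϑ B x w = 0 := by
  simp [basepointContraction, hi w hw]

theorem isAlternatingFun_basepointContraction (hϑ : ∀ b, IsAlternatingFun fun w => ϑ w b)
    (B : Fin p → Fin 2) (x : Fin (2 * n)) : IsAlternatingFun (basepointContraction ϑ B x) := by
  intro σ w
  simp only [basepointContraction, hϑ _ σ w]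
  split_ifs <;> ring

end basepointContraction

section kernel

variable {n j p : ℕ} {ϑ : (Fin (j + 1) → Fin (2 * n)) → (Fin (p + 1) → Fin 2) → ℂ}

theorem eq_zero_of_symb_basepoint_eq_zero (hn : 0 < n)
    (H : symb n (j + 1) p (basepoint n) ϑ = 0) {A : Fin (j + 1) → Fin (2 * n)}
    (hA : ∀ t, 2 ≤ (A t).val) (B : Fin (p + 1) → Fin 2) : ϑ A B = 0 := by
  rw [symb_basepoint_eq_zero_iff] at H
  have hcons : ∀ (c : Fin (2 * n)) (B' : Fin p → Fin 2), basepointContraction ϑ B' c A = 0 := by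
    intro c B'
    have h := H (Fin.cons c A) B'
    rw [Fin.sum_univ_succ, Finset.sum_eq_zero fun s _ => by
      rw [Fin.cons_succ, basepointContraction_of_two_le _ (hA s), mul_zero], add_zero] at h
    simpa using h
  have h0 := hcons ⟨0, by omega⟩ (Fin.tail B)
  have h1 := hcons ⟨1, by omega⟩ (Fin.tail B)
  simp only [basepointContraction, ↓reduceIte, neg_eq_zero, one_ne_zero] at h0 h1
  rw [← Fin.cons_self_tail B]
  obtain hB | hB : B 0 = 0 ∨ B 0 = 1 := by omega
  all_goals rw [hB]; assumption

theorem cons_one_eq_neg_cons_zero_of_symb_basepoint_eq_zero (hn : 0 < n)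
    (H : symb n (j + 1) p (basepoint n) ϑ = 0) {A : Fin j → Fin (2 * n)}
    (hA : ∀ t, 2 ≤ (A t).val) (B : Fin p → Fin 2) :
    ϑ (Fin.cons ⟨1, by omega⟩ A) (Fin.cons 1 B) = -ϑ (Fin.cons ⟨0, by omega⟩ A) (Fin.cons 0 B) := by
  rw [symb_basepoint_eq_zero_iff] at H
  have h := H (Fin.cons ⟨0, by omega⟩ (Fin.cons ⟨1, by omega⟩ A)) B
  rw [Fin.sum_univ_succ, Fin.sum_univ_succ, Finset.sum_eq_zero fun s _ => by
    rw [Fin.cons_succ, Fin.cons_succ, basepointContraction_of_two_le _ (hA s), mul_zero],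
    add_zero] at h
  simp only [Fin.coe_ofNat_eq_mod, Nat.zero_mod, pow_zero, basepointContraction, Fin.cons_zero,
    ↓reduceIte, Fin.removeNth_zero, Fin.tail_cons, mul_neg, one_mul, Fin.succ_zero_eq_one,
    Nat.one_mod, pow_one, Fin.cons_one, one_ne_zero, Fin.removeNth_one_cons_cons, neg_mul] at h
  linear_combination -h

theorem insertNth_one_eq_neg_insertNth_zero (hn : 0 < n)
    (hϑ : ∀ b, IsAlternatingFun fun w => ϑ w b)
    (hii : ∀ A : Fin j → Fin (2 * n), (∀ t, 2 ≤ (A t).val) → ∀ B : Fin p → Fin 2,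
      ϑ (Fin.cons ⟨1, by omega⟩ A) (Fin.cons 1 B) = -ϑ (Fin.cons ⟨0, by omega⟩ A) (Fin.cons 0 B))
    (k : Fin (j + 1)) {r : Fin j → Fin (2 * n)} (hr : ∀ t, 2 ≤ (r t).val) (B : Fin p → Fin 2) :
    ϑ (k.insertNth ⟨1, by omega⟩ r) (Fin.cons 1 B) =
      -ϑ (k.insertNth ⟨0, by omega⟩ r) (Fin.cons 0 B) := by
  rw [(hϑ _).apply_insertNth, (hϑ _).apply_insertNth, hii r hr]
  ring

theorem sum_basepointContraction_eq_zero_of_zero_one (hn : 0 < n)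
    (hϑ : ∀ b, IsAlternatingFun fun w => ϑ w b)
    (hii : ∀ A : Fin j → Fin (2 * n), (∀ t, 2 ≤ (A t).val) → ∀ B : Fin p → Fin 2,
      ϑ (Fin.cons ⟨1, by omega⟩ A) (Fin.cons 1 B) = -ϑ (Fin.cons ⟨0, by omega⟩ A) (Fin.cons 0 B))
    {A : Fin (j + 2) → Fin (2 * n)} (hA : A.Injective) {u v : Fin (j + 2)}
    (hu : (A u).val = 0) (hv : (A v).val = 1) (B : Fin p → Fin 2) :
    ∑ s : Fin (j + 2), (-1) ^ (s : ℕ) * basepointContraction ϑ B (A s) (s.removeNth A) = 0 := by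
  have huv : u ≠ v := by rintro rfl; omega
  have hrest : ∀ s, s ≠ u → s ≠ v → 2 ≤ (A s).val := by
    intro s hsu hsv
    have := Fin.val_ne_of_ne (hA.ne hsu)
    have := Fin.val_ne_of_ne (hA.ne hsv)
    omega
  rw [Fintype.sum_eq_add u v huv fun s ⟨hsu, hsv⟩ => by
    rw [basepointContraction_of_two_le _ (hrest s hsu hsv), mul_zero]]
  simp only [basepointContraction, hu, hv, if_true, one_ne_zero, if_false]
  obtain ⟨u', rfl⟩ := Fin.exists_succAbove_eq huv
  -- Replacing the entry `0` of `A` by `1` creates a repeated entry.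
  have hrep := (hϑ (Fin.cons 1 B)).neg_one_pow_mul_removeNth_add_eq_zero
    (v := Function.update A (v.succAbove u') ⟨1, by omega⟩)
    (by rw [Function.update_self, Function.update_of_ne huv.symm]; exact Fin.ext hv.symm) huv
  have hr : ∀ t, 2 ≤ (u'.removeNth (v.removeNth A) t).val := fun t =>
    hrest _ (Fin.succAbove_right_injective.ne (Fin.succAbove_ne u' t)) (Fin.succAbove_ne v _)
  have hzero : v.removeNth A = u'.insertNth ⟨0, by omega⟩ (u'.removeNth (v.removeNth A)) := by
    conv_lhs => rw [← Fin.insertNth_self_removeNth u' (v.removeNth A)]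
    congr 1; exact Fin.ext hu
  rw [Fin.removeNth_update, Fin.removeNth_update_succAbove, ← Fin.insertNth_removeNth,
    insertNth_one_eq_neg_insertNth_zero hn hϑ hii u' hr, ← hzero] at hrep
  linear_combination -hrep

theorem basepointContraction_removeNth_eq_zero
    (hi : ∀ A : Fin (j + 1) → Fin (2 * n), (∀ t, 2 ≤ (A t).val) → ∀ B, ϑ A B = 0)
    {A : Fin (j + 2) → Fin (2 * n)} (hA : A.Injective)
    (h01 : ¬((∃ u, (A u).val = 0) ∧ ∃ v, (A v).val = 1)) (B : Fin p → Fin 2) (s : Fin (j + 2)) :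
    basepointContraction ϑ B (A s) (s.removeNth A) = 0 := by
  by_cases hs : 2 ≤ (A s).val
  · exact basepointContraction_of_two_le _ hs _
  refine basepointContraction_eq_zero hi _ _ fun t => ?_
  have hne := Fin.val_ne_of_ne (hA.ne (Fin.succAbove_ne s t))
  rw [Fin.removeNth_apply]
  by_contra ht
  rcases Nat.eq_zero_or_pos (A s).val with hs0 | hs0
  · exact h01 ⟨⟨s, hs0⟩, s.succAbove t, by omega⟩
  · exact h01 ⟨⟨s.succAbove t, by omega⟩, s, by omega⟩

theorem symb_basepoint_eq_zero (hn : 0 < n)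
    (hϑ : ∀ b, IsAlternatingFun fun w => ϑ w b)
    (hi : ∀ A : Fin (j + 1) → Fin (2 * n), (∀ t, 2 ≤ (A t).val) → ∀ B, ϑ A B = 0)
    (hii : ∀ A : Fin j → Fin (2 * n), (∀ t, 2 ≤ (A t).val) → ∀ B : Fin p → Fin 2,
      ϑ (Fin.cons ⟨1, by omega⟩ A) (Fin.cons 1 B) = -ϑ (Fin.cons ⟨0, by omega⟩ A) (Fin.cons 0 B)) :
    symb n (j + 1) p (basepoint n) ϑ = 0 := by
  rw [symb_basepoint_eq_zero_iff]
  intro A B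
  by_cases hA : A.Injective
  · by_cases h01 : (∃ u, (A u).val = 0) ∧ ∃ v, (A v).val = 1
    · obtain ⟨⟨u, hu⟩, v, hv⟩ := h01
      exact sum_basepointContraction_eq_zero_of_zero_one hn hϑ hii hA hu hv B
    · exact Finset.sum_eq_zero fun s _ => by
        rw [basepointContraction_removeNth_eq_zero hi hA h01, mul_zero]
  · obtain ⟨u, v, huv, hne⟩ := Function.not_injective_iff.mp hA
    exact IsAlternatingFun.sum_neg_one_pow_mul_removeNth_eq_zero
      (isAlternatingFun_basepointContraction hϑ B) huv hne

end kernel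

/-- Here the statement's `j` and `p` are `j + 1` and `p + 1`. -/
theorem symb_kernel_at_basepoint (n j p : ℕ) (hn : 1 ≤ n)
    (ϑ : (Fin (j + 1) → Fin (2 * n)) → (Fin (p + 1) → Fin 2) → ℂ)
    (hϑ : IsAltSym n (j + 1) (p + 1) ϑ) :
    symb n (j + 1) p (fun i => if i.val = 0 then 1 else 0) ϑ = 0 ↔
      ((∀ A : Fin (j + 1) → Fin (2 * n), (∀ t, 2 ≤ (A t).val) →
          ∀ B : Fin (p + 1) → Fin 2, ϑ A B = 0) ∧
       (∀ A : Fin j → Fin (2 * n), (∀ t, 2 ≤ (A t).val) →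
          ∀ B : Fin p → Fin 2,
            ϑ (Fin.cons ⟨1, by omega⟩ A) (Fin.cons 1 B) =
              -ϑ (Fin.cons ⟨0, by omega⟩ A) (Fin.cons 0 B))) := by
  constructor
  · intro H
    exact ⟨fun _ hA B => eq_zero_of_symb_basepoint_eq_zero hn H hA B,
      fun _ hA B => cons_one_eq_neg_cons_zero_of_symb_basepoint_eq_zero hn H hA B⟩
  · rintro ⟨hi, hii⟩
    exact symb_basepoint_eq_zero hn hϑ.isAlternatingFun hi hii
end
end

section
/- Let n ≥ 1, 1 ≤ k ≤ 2n−2, and let ξ* = (1,0,…,0) ∈ ℝ^{4n} (so that (ξ*_{AA'}) has first two rows equal to the 2×2 identity and all other rows zero). Then the kernel of the Baston symbol Δ_k(ξ*) : Λ^k ℂ^{2n} → Λ^{k+2} ℂ^{2n} consists exactly of those alternating ϑ with ϑ(B₁,…,B_k) = 0 for all B₁,…,B_k ∈ {2,…,2n−1}. -/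
noncomputable section

/-- The Baston symbol `Δ_k(ξ) : Λ^k ℂ^{2n} → Λ^{k+2} ℂ^{2n}`: the total antisymmetrization
(normalized by `1/(k+2)!`) of `(A₁,…,A_{k+2}) ↦ ∑_{a} ξ_{A₁ a} ξ_{A₂}{}^{a} ϑ(A₃,…,A_{k+2})`. -/
def baston (n k : ℕ) (ξ : Fin (4 * n) → ℝ)
    (ϑ : (Fin k → Fin (2 * n)) → (Fin 0 → Fin 2) → ℂ) :
    (Fin (k + 2) → Fin (2 * n)) → (Fin 0 → Fin 2) → ℂ :=
  fun A _ => ((Nat.factorial (k + 2) : ℕ) : ℂ)⁻¹ *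
    ∑ σ : Equiv.Perm (Fin (k + 2)), ((Equiv.Perm.sign σ : ℤ) : ℂ) *
      ∑ a : Fin 2, xiMat n ξ (A (σ 0)) a * xiUp n ξ (A (σ 1)) a *
        ϑ (fun t => A (σ t.succ.succ)) (fun i => i.elim0)

/-
At `ξ* = (1,0,…,0)` the matrix `(ξ*_{AA'})` is the identity on rows `0, 1` and zero elsewhere, so
the contraction `∑_{A'} ξ*_{AA'} ξ*_B{}^{A'}` is the 2-form `ω = e⁰ ∧ e¹`, and `Δ_k(ξ*) ϑ` is the
alternation of `ω ⊗ ϑ`. If `ϑ` vanishes on tuples with all indices `≥ 2`, every term of that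
alternation at a tuple of distinct indices has `ω = 0` or feeds `ϑ` the indices other than `0, 1`,
and an alternation vanishes at tuples with a repeated index. Conversely, at `(0, 1, B)` with all
`B t ≥ 2` only the `2 · k!` permutations preserving `{0, 1}` survive, each contributing `ϑ B`.
-/

open Equiv Finset

section Alternating

variable {α R : Type*} [CommRing R]

theorem Int.cast_units_mul_self (u : ℤˣ) : ((u : ℤ) : R) * (u : ℤ) = 1 := by
  rw [← Int.cast_mul, ← Units.val_mul, Int.units_mul_self, Units.val_one, Int.cast_one]

def IsAlternating {ι : Type*} [Fintype ι] [DecidableEq ι] (f : (ι → α) → R) : Prop :=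
  ∀ (σ : Perm ι) (a : ι → α), f (a ∘ σ) = ((Perm.sign σ : ℤ) : R) * f a

theorem IsAlternating.eq_zero_of_eq {ι : Type*} [Fintype ι] [DecidableEq ι] [IsAddTorsionFree R]
    {f : (ι → α) → R} (hf : IsAlternating f) {a : ι → α} {i j : ι} (hij : i ≠ j)
    (h : a i = a j) : f a = 0 := by
  have hswap : a ∘ swap i j = a := by
    rw [comp_swap_eq_update, h, Function.update_eq_self, ← h, Function.update_eq_self]
  have := hf (swap i j) a
  rw [hswap, Perm.sign_swap hij] at this
  exact self_eq_neg.mp (by simpa using this)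

theorem sum_perm_fin_add_two {M : Type*} [AddCommMonoid M] {k : ℕ} (f : Perm (Fin (k + 2)) → M) :
    ∑ σ, f σ = ∑ p, ∑ q, ∑ ρ : Perm (Fin k),
      f (Perm.decomposeFin.symm (p, Perm.decomposeFin.symm (q, ρ))) := by
  rw [← Equiv.sum_comp Perm.decomposeFin.symm, Fintype.sum_prod_type]
  refine sum_congr rfl fun p _ => ?_
  rw [← Equiv.sum_comp Perm.decomposeFin.symm, Fintype.sum_prod_type]

variable {k : ℕ}

/-- `((k + 2)!)⁻¹ • altWedge ω θ` is the alternation of `ω ⊗ θ`; for `ω` the contraction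
`ξ_{AA'} ξ_B{}^{A'}` it is the Baston symbol. -/
def altWedge (ω : α → α → R) (θ : (Fin k → α) → R) (A : Fin (k + 2) → α) : R :=
  ∑ σ : Perm (Fin (k + 2)),
    ((Perm.sign σ : ℤ) : R) * ω (A (σ 0)) (A (σ 1)) * θ (fun t => A (σ t.succ.succ))

theorem isAlternating_altWedge (ω : α → α → R) (θ : (Fin k → α) → R) :
    IsAlternating (altWedge ω θ) := by
  intro π A
  rw [altWedge, altWedge, mul_sum]
  refine Fintype.sum_equiv (Equiv.mulLeft π) _ _ fun σ => ?_
  simp only [coe_mulLeft, Perm.mul_apply, Function.comp_apply, Perm.sign_mul, Units.val_mul,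
    Int.cast_mul]
  linear_combination (-(((Perm.sign σ : ℤ) : R)) * ω (A (π (σ 0))) (A (π (σ 1))) *
    θ (fun t => A (π (σ t.succ.succ)))) * Int.cast_units_mul_self (R := R) (Perm.sign π)

theorem altWedge_eq_zero [IsAddTorsionFree R] {ω : α → α → R} {θ : (Fin k → α) → R}
    (h : ∀ x y (C : Fin k → α), x ∉ Set.range C → y ∉ Set.range C → ω x y * θ C = 0)
    (A : Fin (k + 2) → α) : altWedge ω θ A = 0 := by
  by_cases hA : Function.Injective A
  · refine sum_eq_zero fun σ _ => ?_
    rw [mul_assoc, h _ _ _ ?_ ?_, mul_zero]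
    · rintro ⟨t, ht⟩
      exact Fin.succ_ne_zero _ (σ.injective (hA ht))
    · rintro ⟨t, ht⟩
      exact Fin.succ_ne_zero _ (Fin.succ_injective _ (σ.injective (hA ht)))
  · obtain ⟨i, j, hij, hne⟩ := Function.not_injective_iff.mp hA
    exact (isAlternating_altWedge ω θ).eq_zero_of_eq hne hij

theorem altWedge_cons_cons {ω : α → α → R} {θ : (Fin k → α) → R} (hθ : IsAlternating θ)
    (x y : α) {B : Fin k → α} (hB : ∀ t u, ω (B t) u = 0 ∧ ω u (B t) = 0) :
    altWedge ω θ (Fin.cons x (Fin.cons y B)) = (k.factorial : R) * (ω x y - ω y x) * θ B := by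
  have hterm (c : R) (ρ : Perm (Fin k)) :
      ((Perm.sign ρ : ℤ) : R) * c * θ (fun t => B (ρ t)) = c * θ B := by
    rw [show (fun t => B (ρ t)) = B ∘ ρ from rfl, hθ ρ B]
    linear_combination c * θ B * Int.cast_units_mul_self (R := R) (Perm.sign ρ)
  have hswap (t : Fin k) : swap (0 : Fin (k + 2)) 1 t.succ.succ = t.succ.succ :=
    swap_apply_of_ne_of_ne (Fin.succ_ne_zero _) fun h =>
      Fin.succ_ne_zero t (Fin.succ_injective _ (h.trans Fin.succ_zero_eq_one.symm))
  rw [altWedge, sum_perm_fin_add_two, Fin.sum_univ_succ, Fin.sum_univ_succ,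
    Fin.sum_univ_succ, Fin.sum_univ_succ]
  simp only [Perm.decomposeFin.symm_sign, Perm.decomposeFin_symm_apply_zero,
    Perm.decomposeFin_symm_apply_one, Perm.decomposeFin_symm_apply_succ, swap_self, refl_apply,
    swap_apply_right, hswap, Fin.succ_zero_eq_one, Fin.cons_zero, Fin.cons_one, Fin.cons_succ, hB,
    ↓reduceIte, Fin.succ_ne_zero, one_ne_zero, one_mul, neg_mul, mul_neg, Units.val_neg,
    Int.cast_neg, hterm, sum_const, card_univ, Fintype.card_perm, Fintype.card_fin, nsmul_eq_mul,
    mul_zero, zero_mul, add_zero, neg_neg]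
  ring

end Alternating

def basepointForm (n : ℕ) (x y : Fin (2 * n)) : ℂ :=
  if x.val = 0 ∧ y.val = 1 then 1 else if x.val = 1 ∧ y.val = 0 then -1 else 0

theorem xiMat_basepoint (n : ℕ) (A : Fin (2 * n)) (A' : Fin 2) :
    xiMat n (fun i => if i.val = 0 then 1 else 0) A A' =
      if A.val = A'.val then 1 else 0 := by
  fin_cases A' <;> simp only [xiMat, Matrix.of_apply, Complex.ext_iff] <;> split_ifs <;> simp <;>
    omega

theorem sum_xiMat_mul_xiUp_basepoint (n : ℕ) (x y : Fin (2 * n)) :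
    ∑ a : Fin 2, xiMat n (fun i => if i.val = 0 then 1 else 0) x a *
      xiUp n (fun i => if i.val = 0 then 1 else 0) y a = basepointForm n x y := by
  norm_num [xiUp, xiMat_basepoint, epsUp, basepointForm]
  split_ifs <;> simp_all

theorem baston_basepoint (n k : ℕ) (ϑ : (Fin k → Fin (2 * n)) → (Fin 0 → Fin 2) → ℂ)
    (A : Fin (k + 2) → Fin (2 * n)) (b : Fin 0 → Fin 2) :
    baston n k (fun i => if i.val = 0 then 1 else 0) ϑ A b =
      ((k + 2).factorial : ℂ)⁻¹ * altWedge (basepointForm n) (fun B => ϑ B Fin.elim0) A := by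
  refine congrArg _ (sum_congr rfl fun σ _ => ?_)
  rw [← sum_mul, sum_xiMat_mul_xiUp_basepoint, mul_assoc]

theorem basepointForm_eq_zero_of_two_le {n : ℕ} {x : Fin (2 * n)} (hx : 2 ≤ x.val)
    (y : Fin (2 * n)) :
    basepointForm n x y = 0 ∧ basepointForm n y x = 0 := by
  constructor <;> simp only [basepointForm] <;> split_ifs <;> first | rfl | omega

theorem basepointForm_mul_eq_zero {n k : ℕ} {θ : (Fin k → Fin (2 * n)) → ℂ}
    (hθ : ∀ C : Fin k → Fin (2 * n), (∀ t, 2 ≤ (C t).val) → θ C = 0)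
    (x y : Fin (2 * n)) (C : Fin k → Fin (2 * n)) (hx : x ∉ Set.range C)
    (hy : y ∉ Set.range C) :
    basepointForm n x y * θ C = 0 := by
  by_cases hxy : (x.val = 0 ∧ y.val = 1) ∨ (x.val = 1 ∧ y.val = 0)
  · refine mul_eq_zero_of_right _ (hθ C fun t => ?_)
    have hCx : (C t).val ≠ x.val := fun h => hx ⟨t, Fin.ext h⟩
    have hCy : (C t).val ≠ y.val := fun h => hy ⟨t, Fin.ext h⟩
    omega
  · rw [basepointForm, if_neg (by tauto), if_neg (by tauto), zero_mul]

theorem baston_kernel_at_basepoint_general (n k : ℕ) (hn : 1 ≤ n)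
    (ϑ : (Fin k → Fin (2 * n)) → (Fin 0 → Fin 2) → ℂ)
    (hϑ : IsAltSym n k 0 ϑ) :
    baston n k (fun i => if i.val = 0 then 1 else 0) ϑ = 0 ↔
      ∀ B : Fin k → Fin (2 * n), (∀ t, 2 ≤ (B t).val) →
        ϑ B (fun i => i.elim0) = 0 := by
  have hθ : IsAlternating fun B : Fin k → Fin (2 * n) => ϑ B Fin.elim0 :=
    fun σ a => hϑ.1 σ a Fin.elim0
  constructor
  · intro h B hB
    have hA := congrFun (congrFun h (Fin.cons ⟨0, by omega⟩ (Fin.cons ⟨1, by omega⟩ B)))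
      Fin.elim0
    rw [baston_basepoint, altWedge_cons_cons hθ _ _
      fun t => basepointForm_eq_zero_of_two_le (hB t)] at hA
    simpa [basepointForm, Nat.factorial_ne_zero] using hA
  · intro h
    funext A b
    rw [baston_basepoint, altWedge_eq_zero (basepointForm_mul_eq_zero h), mul_zero]
    rfl

/-- Description of the kernel of the Baston symbol `Δ_k(ξ*)` for `ξ* = (1,0,…,0)` and
`1 ≤ k ≤ 2n−2`: an alternating `ϑ ∈ Λ^k ℂ^{2n}` lies in the kernel iff
`ϑ(B₁,…,B_k) = 0` whenever all `B₁,…,B_k ≥ 2`. -/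
theorem baston_kernel_at_basepoint (n k : ℕ) (hn : 1 ≤ n) (hk1 : 1 ≤ k)
    (hk2 : k + 2 ≤ 2 * n)
    (ϑ : (Fin k → Fin (2 * n)) → (Fin 0 → Fin 2) → ℂ)
    (hϑ : IsAltSym n k 0 ϑ) :
    baston n k (fun i => if i.val = 0 then 1 else 0) ϑ = 0 ↔
      ∀ B : Fin k → Fin (2 * n), (∀ t, 2 ≤ (B t).val) →
        ϑ B (fun i => i.elim0) = 0 :=
  baston_kernel_at_basepoint_general n k hn ϑ hϑ
end
end
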